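/- arXiv:2511.14562 — 2 statements merged into one kernel-verified Lean document; each statement's English description precedes it below -/
import Mathlib

section
/- Let G be a finite group with subgroups H and B, and let X be a subset of G that is a union of double cosets H·x·B and satisfies H·B ⊆ X. If B is normalized by every element of X (i.e., x·B·x⁻¹ = B for all x ∈ X) and |X| = 2·|H·B|, then X is the disjoint union of exactly two double cosets: X = H·B ∪ H·w·B for some w ∈ X with w ∉ H·B. -/
/-!
Pick `w ∈ X` outside `H * B`, which exists by counting. Since `w` normalizes `B`, the double
coset `H * {w} * B = H * B * {w}` is a right translate of `H * B`, hence has the same size, and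
distinct double cosets are disjoint. So `H * B ∪ H * {w} * B ⊆ X` already has
`2 * |H * B| = |X|` elements.
-/

open scoped Pointwise

namespace Set

variable {G : Type*} [Group G]

theorem singleton_mul_eq_mul_singleton_of_conj_eq {s : Set G} {w : G}
    (h : {w} * s * {w⁻¹} = s) : {w} * s = s * {w} :=
  calc {w} * s = {w} * s * {w⁻¹} * {w} := by
        rw [mul_assoc _ {w⁻¹}, singleton_mul_singleton, inv_mul_cancel, singleton_one, mul_one]
    _ = s * {w} := by rw [h]

theorem ncard_mul_singleton (s : Set G) (w : G) : (s * {w}).ncard = s.ncard := by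
  rw [mul_singleton]
  exact ncard_image_of_injective s (mul_left_injective w)

theorem ncard_doubleCoset_of_conj_eq (H : Set G) {B : Set G} {w : G}
    (h : {w} * B * {w⁻¹} = B) : (H * {w} * B).ncard = (H * B).ncard := by
  rw [mul_assoc, singleton_mul_eq_mul_singleton_of_conj_eq h, ← mul_assoc, ncard_mul_singleton]

end Set

theorem Subgroup.disjoint_mul_doubleCoset {G : Type*} [Group G] (H K : Subgroup G) {w : G}
    (hw : w ∉ (H : Set G) * (K : Set G)) :
    Disjoint ((H : Set G) * (K : Set G)) ((H : Set G) * {w} * (K : Set G)) := by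
  have hone : DoubleCoset.doubleCoset 1 H K = (H : Set G) * (K : Set G) := by
    rw [DoubleCoset.doubleCoset, Set.singleton_one, mul_one]
  by_contra hdisj
  rw [← hone] at hw hdisj
  exact hw (DoubleCoset.mem_doubleCoset_of_not_disjoint hdisj)

theorem stmt_3 {G : Type*} [Group G] [Fintype G] (H B : Subgroup G) (X : Set G)
    (hunion : ∀ x ∈ X, (H : Set G) * {x} * (B : Set G) ⊆ X)
    (hHB : (H : Set G) * (B : Set G) ⊆ X)
    (hnorm : ∀ x ∈ X, {x} * (B : Set G) * {x⁻¹} = (B : Set G))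
    (hcard : Nat.card X = 2 * Nat.card ((H : Set G) * (B : Set G))) :
    ∃ w ∈ X, w ∉ (H : Set G) * (B : Set G) ∧
      X = (H : Set G) * (B : Set G) ∪ (H : Set G) * {w} * (B : Set G) ∧
      Disjoint ((H : Set G) * (B : Set G)) ((H : Set G) * {w} * (B : Set G)) := by
  rw [Nat.card_coe_set_eq, Nat.card_coe_set_eq] at hcard
  have hHB_pos : 0 < ((H : Set G) * (B : Set G)).ncard :=
    (Set.ncard_pos).mpr ⟨1, 1, H.one_mem, 1, B.one_mem, mul_one 1⟩
  obtain ⟨w, hwX, hwHB⟩ : ∃ w ∈ X, w ∉ (H : Set G) * (B : Set G) :=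
    Set.exists_mem_notMem_of_ncard_lt_ncard (by omega)
  have hdisj := H.disjoint_mul_doubleCoset B hwHB
  have hsub := Set.union_subset hHB (hunion w hwX)
  refine ⟨w, hwX, hwHB, (Set.eq_of_subset_of_ncard_le hsub ?_).symm, hdisj⟩
  rw [Set.ncard_union_eq hdisj, Set.ncard_doubleCoset_of_conj_eq _ (hnorm w hwX), hcard]
  omega
end

section
/- Let G be a finite group with subgroups H and B, and let X be a subset of G that is a union of (H,B)-double cosets containing H·B. If H is normalized by every element of X (i.e., x·H·x⁻¹ = H for all x ∈ X) and |X| = 2·|H·B|, then X = H·B ∪ H·w·B for some w ∉ H·B, a disjoint union of two double cosets. -/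
/-!
Pick any `w ∈ X` outside `H·B`; it exists because `|X| > |H·B|`. Since `w` normalizes `H`, the
double coset `H·w·B` equals the translate `w·(H·B)` and so has exactly `|H·B|` elements. Distinct
double cosets are disjoint, so `H·B ∪ H·w·B` is a subset of `X` of size `2·|H·B| = |X|`, hence all
of `X`.
-/

open scoped Pointwise

open DoubleCoset

section

variable {G : Type*} [Group G]

lemma Set.singleton_mul_eq_mul_singleton_of_conj_eq_s4 {s : Set G} {w : G}
    (h : {w} * s * {w⁻¹} = s) : {w} * s = s * {w} := by
  conv_rhs => rw [← h]
  rw [mul_assoc, Set.singleton_mul_singleton, inv_mul_cancel, Set.singleton_one, mul_one]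

lemma DoubleCoset.doubleCoset_eq_image_mul_of_conj_eq {s t : Set G} {w : G}
    (h : {w} * s * {w⁻¹} = s) : doubleCoset w s t = (w * ·) '' (s * t) := by
  rw [doubleCoset, ← Set.singleton_mul_eq_mul_singleton_of_conj_eq_s4 h, mul_assoc,
    Set.singleton_mul]

lemma DoubleCoset.ncard_doubleCoset_of_conj_eq {s t : Set G} {w : G}
    (h : {w} * s * {w⁻¹} = s) : (doubleCoset w s t).ncard = (s * t).ncard := by
  rw [doubleCoset_eq_image_mul_of_conj_eq h,
    Set.ncard_image_of_injective _ (mul_right_injective w)]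

lemma DoubleCoset.doubleCoset_one (s t : Set G) : doubleCoset 1 s t = s * t := by
  rw [doubleCoset, Set.singleton_one, mul_one]

lemma DoubleCoset.disjoint_mul_doubleCoset_of_notMem {H K : Subgroup G} {w : G}
    (hw : w ∉ (H : Set G) * K) : Disjoint ((H : Set G) * K) (doubleCoset w H K) := by
  rw [← doubleCoset_one] at hw ⊢
  by_contra hnd
  exact hw (mem_doubleCoset_of_not_disjoint hnd)

end

lemma Set.eq_union_of_disjoint_of_ncard_eq {α : Type*} {s t u : Set α} (hu : u.Finite)
    (hs : s ⊆ u) (ht : t ⊆ u) (hst : Disjoint s t) (hcard : u.ncard = s.ncard + t.ncard) :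
    u = s ∪ t := by
  refine (Set.eq_of_subset_of_ncard_le (Set.union_subset hs ht) ?_ hu).symm
  rw [Set.ncard_union_eq hst (hu.subset hs) (hu.subset ht), hcard]

theorem stmt_4 {G : Type*} [Group G] [Fintype G] (H B : Subgroup G) (X : Set G)
    (hunion : ∀ x ∈ X, (H : Set G) * {x} * (B : Set G) ⊆ X)
    (hHB : (H : Set G) * (B : Set G) ⊆ X)
    (hnorm : ∀ x ∈ X, {x} * (H : Set G) * {x⁻¹} = (H : Set G))
    (hcard : Nat.card X = 2 * Nat.card ((H : Set G) * (B : Set G))) :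
    ∃ w ∈ X, w ∉ (H : Set G) * (B : Set G) ∧
      X = (H : Set G) * (B : Set G) ∪ (H : Set G) * {w} * (B : Set G) ∧
      Disjoint ((H : Set G) * (B : Set G)) ((H : Set G) * {w} * (B : Set G)) := by
  rw [Nat.card_coe_set_eq, Nat.card_coe_set_eq] at hcard
  have hpos : 0 < ((H : Set G) * B).ncard :=
    (Set.ncard_pos (Set.toFinite _)).2 ⟨1, 1, H.one_mem, 1, B.one_mem, mul_one 1⟩
  obtain ⟨w, hwX, hw⟩ :=
    Set.exists_mem_notMem_of_ncard_lt_ncard (s := (H : Set G) * (B : Set G)) (t := X) (by omega)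
  have hdisj := disjoint_mul_doubleCoset_of_notMem hw
  refine ⟨w, hwX, hw, Set.eq_union_of_disjoint_of_ncard_eq (Set.toFinite X) hHB (hunion w hwX)
    hdisj ?_, hdisj⟩
  rw [← doubleCoset, ncard_doubleCoset_of_conj_eq (hnorm w hwX)]
  omega
end
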